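/- arXiv:math/0605306 — 3 statements merged into one kernel-verified Lean document; each statement's English description precedes it below -/
import Mathlib

section
/- Let ρ and σ be two well agreeing near weights on R and let S ⊆ R be a subset closed under addition and multiplication. Then H(S) is closed under addition: if a, b ∈ H(S), then a + b ∈ H(S). In particular, for every F-subalgebra R' of R, the set H(R') is a subsemigroup of ℕ². -/
structure NearWeight (F R : Type*) [Field F] [CommRing R] [Algebra F R] where
  w : R → WithBot ℕ
  N0 : ∀ f : R, w f = ⊥ ↔ f = 0
  N1 : ∀ (c : F) (f : R), c ≠ 0 → w (c • f) = w f
  N2 : ∀ f g : R, w (f + g) ≤ max (w f) (w g)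
  N3 : ∀ f g h : R, w f < w g → w (f * h) ≤ w (g * h)
  N3' : ∀ f g h : R, w f < w g → w 1 < w h → w (f * h) < w (g * h)
  N4 : ∀ f g : R, w 1 < w f → w 1 < w g → w f = w g →
      ∃ c : F, c ≠ 0 ∧ w (f - c • g) < w f
  N5 : ∀ f g : R, w (f * g) ≤ w f + w g
  N5' : ∀ f g : R, w 1 < w f → w 1 < w g → w (f * g) = w f + w g
  norm0 : ∀ f : R, f ≠ 0 → w f ≤ w 1 → w f = 0
  normgcd : ∀ d : ℕ, (∀ f : R, w 1 < w f → ∃ k : ℕ, w f = ((d * k : ℕ) : WithBot ℕ)) → d = 1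

namespace NearWeight

variable {F R : Type*} [Field F] [CommRing R] [Algebra F R]

def U (ρ : NearWeight F R) : Set R := {r | ρ.w r ≤ ρ.w 1}

def M (ρ : NearWeight F R) : Set R := {r | ρ.w 1 < ρ.w r}

def nval (ρ : NearWeight F R) (f : R) : ℕ := (ρ.w f).unbotD 0

def Hset (ρ σ : NearWeight F R) (S : Set R) : Set (ℕ × ℕ) :=
  {p | ∃ f ∈ S, f ≠ 0 ∧ (ρ.nval f, σ.nval f) = p}

def WellAgreeing (ρ σ : NearWeight F R) : Prop :=
  (Hset ρ σ Set.univ)ᶜ.Finite ∧ ρ.U ∩ σ.U = Set.range (algebraMap F R)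

noncomputable def xH (ρ σ : NearWeight F R) (n : ℕ) : ℕ :=
  sInf {m | (m, n) ∈ Hset ρ σ Set.univ}

noncomputable def yH (ρ σ : NearWeight F R) (n : ℕ) : ℕ :=
  sInf {m | (n, m) ∈ Hset ρ σ Set.univ}

def lub (a b : ℕ × ℕ) : ℕ × ℕ := (max a.1 b.1, max a.2 b.2)

noncomputable def Gamma (ρ σ : NearWeight F R) : Set (ℕ × ℕ) :=
  {p | ∃ m : ℕ, p = (m, yH ρ σ m)} ∪ {p | ∃ n : ℕ, p = (xH ρ σ n, n)}

def Hbarx (ρ σ : NearWeight F R) : Set ℕ := {m | (m, 0) ∈ Hset ρ σ Set.univ}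

def Hbary (ρ σ : NearWeight F R) : Set ℕ := {n | (0, n) ∈ Hset ρ σ Set.univ}

noncomputable def GammaTilde (ρ σ : NearWeight F R) : Set (ℕ × ℕ) :=
  {p | ∃ m : ℕ, m ∉ Hbarx ρ σ ∧ p = (m, yH ρ σ m)}

def Delta (p : ℕ × ℕ) : Set (ℕ × ℕ) :=
  {q | (q.1 = p.1 ∧ q.2 < p.2) ∨ (q.2 = p.2 ∧ q.1 < p.1)}

noncomputable def tw (ρ : NearWeight F R) (f : R) : ℤ :=
  sInf {z : ℤ | ∃ g ∈ ρ.M, z = (ρ.nval (f * g) : ℤ) - (ρ.nval g : ℤ)}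


/-!
For nonzero `f, g` one of `f g`, `f + f g`, `g + f g`, `f + g` has weight vector
`(ρ f + ρ g, σ f + σ g)`. Scalars act without changing weights, and every non-scalar lies in
`M_ρ` or `M_σ` because `U_ρ ∩ U_σ = F`. If `f, g ∈ M_σ`, then `σ (f g) = σ f + σ g`; for `ρ`,
either `f, g ∈ M_ρ` as well and `f g` works, or say `ρ f = 0`, so `ρ (f g) ≤ ρ g`, and if the
inequality is strict then `g + f g` works. The same holds with `ρ` and `σ` exchanged. In the
remaining case `f` and `g` sit in `M` for different weights and `f + g` works by the strict
ultrametric inequality.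
-/

section Weight

variable (τ : NearWeight F R)

lemma w_ne_bot {f : R} (hf : f ≠ 0) : τ.w f ≠ ⊥ :=
  (τ.N0 f).not.mpr hf

lemma ne_zero_of_w_ne_bot {f : R} (hf : τ.w f ≠ ⊥) : f ≠ 0 :=
  (τ.N0 f).not.mp hf

lemma w_neg (f : R) : τ.w (-f) = τ.w f := by
  simpa using τ.N1 (-1) f (by norm_num)

lemma w_add_eq_right {a b : R} (h : τ.w a < τ.w b) : τ.w (a + b) = τ.w b := by
  refine le_antisymm ((τ.N2 a b).trans (max_le h.le le_rfl)) ?_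
  have hb : τ.w b ≤ max (τ.w (a + b)) (τ.w a) := by
    simpa [w_neg] using τ.N2 (a + b) (-a)
  exact (le_max_iff.mp hb).resolve_right h.not_ge

lemma w_add_eq_left {a b : R} (h : τ.w b < τ.w a) : τ.w (a + b) = τ.w a := by
  rw [add_comm]; exact τ.w_add_eq_right h

lemma w_algebraMap_mul {c : F} (hc : c ≠ 0) (g : R) : τ.w (algebraMap F R c * g) = τ.w g := by
  rw [← Algebra.smul_def, τ.N1 c g hc]

lemma w_mul_le_of_eq_zero {f : R} (hf : τ.w f = 0) (g : R) : τ.w (f * g) ≤ τ.w g := by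
  simpa [hf] using τ.N5 f g

variable [Nontrivial R]

lemma w_one : τ.w 1 = 0 :=
  τ.norm0 1 one_ne_zero le_rfl

lemma w_algebraMap {c : F} (hc : c ≠ 0) : τ.w (algebraMap F R c) = 0 := by
  simpa [τ.w_one] using τ.w_algebraMap_mul hc 1

lemma w_eq_zero_or_pos {f : R} (hf : f ≠ 0) : τ.w f = 0 ∨ 0 < τ.w f :=
  (le_or_gt (τ.w f) 0).imp (fun h => τ.norm0 f hf (τ.w_one ▸ h)) id

lemma w_mul_of_pos {f g : R} (hf : 0 < τ.w f) (hg : 0 < τ.w g) :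
    τ.w (f * g) = τ.w f + τ.w g :=
  τ.N5' f g (τ.w_one ▸ hf) (τ.w_one ▸ hg)

end Weight

lemma _root_.WithBot.lt_add_of_pos_of_ne_bot {a b : WithBot ℕ} (ha : 0 < a) (hb : b ≠ ⊥) :
    b < a + b := by
  simpa using WithBot.add_lt_add_right hb ha

def IsWeightSum (ρ σ : NearWeight F R) (f g h : R) : Prop :=
  ρ.w h = ρ.w f + ρ.w g ∧ σ.w h = σ.w f + σ.w g

section WeightSum

variable {ρ σ : NearWeight F R} {f g h : R}

lemma IsWeightSum.swap_weights (hs : IsWeightSum ρ σ f g h) : IsWeightSum σ ρ f g h :=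
  hs.symm

lemma IsWeightSum.swap_args (hs : IsWeightSum ρ σ f g h) : IsWeightSum ρ σ g f h :=
  ⟨hs.1.trans (add_comm _ _), hs.2.trans (add_comm _ _)⟩

lemma IsWeightSum.ne_zero (hs : IsWeightSum ρ σ f g h) (hf : f ≠ 0) (hg : g ≠ 0) : h ≠ 0 :=
  ρ.ne_zero_of_w_ne_bot <| hs.1 ▸ WithBot.add_ne_bot.mpr ⟨ρ.w_ne_bot hf, ρ.w_ne_bot hg⟩

lemma nval_eq_add_of_w_eq_add (τ : NearWeight F R) (hf : f ≠ 0) (hg : g ≠ 0)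
    (h_eq : τ.w h = τ.w f + τ.w g) : τ.nval h = τ.nval f + τ.nval g := by
  obtain ⟨a, ha⟩ := WithBot.ne_bot_iff_exists.mp (τ.w_ne_bot hf)
  obtain ⟨b, hb⟩ := WithBot.ne_bot_iff_exists.mp (τ.w_ne_bot hg)
  rw [nval, nval, nval, h_eq, ← ha, ← hb]
  rfl

variable {S : Set R}

lemma exists_isWeightSum_of_algebraMap [Nontrivial R]
    (hmul : ∀ a ∈ S, ∀ b ∈ S, a * b ∈ S) {c : F} (hc : c ≠ 0)
    (hcS : algebraMap F R c ∈ S) (hgS : g ∈ S) :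
    ∃ h ∈ S, IsWeightSum ρ σ (algebraMap F R c) g h :=
  ⟨_, hmul _ hcS _ hgS, by simp [IsWeightSum, w_algebraMap_mul, w_algebraMap, hc]⟩

lemma exists_isWeightSum_of_eq_zero_of_pos [Nontrivial R]
    (hadd : ∀ a ∈ S, ∀ b ∈ S, a + b ∈ S) (hmul : ∀ a ∈ S, ∀ b ∈ S, a * b ∈ S)
    (hρf : ρ.w f = 0) (hσf : 0 < σ.w f) (hσg : 0 < σ.w g) (hg : g ≠ 0) (hfS : f ∈ S) (hgS : g ∈ S) :
    ∃ h ∈ S, IsWeightSum ρ σ f g h := by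
  have hσ := σ.w_mul_of_pos hσf hσg
  rcases (ρ.w_mul_le_of_eq_zero hρf g).eq_or_lt with heq | hlt
  · exact ⟨f * g, hmul f hfS g hgS, by rw [heq, hρf, zero_add], hσ⟩
  · refine ⟨g + f * g, hadd g hgS _ (hmul f hfS g hgS), ?_, ?_⟩
    · rw [ρ.w_add_eq_left hlt, hρf, zero_add]
    · rw [σ.w_add_eq_right (hσ ▸ WithBot.lt_add_of_pos_of_ne_bot hσf (σ.w_ne_bot hg)), hσ]

lemma exists_isWeightSum_of_pos [Nontrivial R]
    (hadd : ∀ a ∈ S, ∀ b ∈ S, a + b ∈ S) (hmul : ∀ a ∈ S, ∀ b ∈ S, a * b ∈ S)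
    (hσf : 0 < σ.w f) (hσg : 0 < σ.w g) (hf : f ≠ 0) (hg : g ≠ 0) (hfS : f ∈ S) (hgS : g ∈ S) :
    ∃ h ∈ S, IsWeightSum ρ σ f g h := by
  rcases ρ.w_eq_zero_or_pos hf with hρf | hρf
  · exact exists_isWeightSum_of_eq_zero_of_pos hadd hmul hρf hσf hσg hg hfS hgS
  rcases ρ.w_eq_zero_or_pos hg with hρg | hρg
  · obtain ⟨h, hS, hs⟩ := exists_isWeightSum_of_eq_zero_of_pos hadd hmul hρg hσg hσf hf hgS hfS
    exact ⟨h, hS, hs.swap_args⟩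
  · exact ⟨f * g, hmul f hfS g hgS, ρ.w_mul_of_pos hρf hρg, σ.w_mul_of_pos hσf hσg⟩

lemma isWeightSum_add (hρg : ρ.w g = 0) (hσf : σ.w f = 0)
    (hρf : 0 < ρ.w f) (hσg : 0 < σ.w g) : IsWeightSum ρ σ f g (f + g) :=
  ⟨by rw [ρ.w_add_eq_left (hρg ▸ hρf), hρg, add_zero],
    by rw [σ.w_add_eq_right (hσf ▸ hσg), hσf, zero_add]⟩

lemma pos_or_pos_of_notMem_range [Nontrivial R]
    (hU : ρ.U ∩ σ.U = Set.range (algebraMap F R))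
    (hfF : f ∉ Set.range (algebraMap F R)) : 0 < ρ.w f ∨ 0 < σ.w f := by
  by_contra! h
  have hfU : f ∈ ρ.U ∩ σ.U := ⟨show ρ.w f ≤ ρ.w 1 from ρ.w_one ▸ h.1,
    show σ.w f ≤ σ.w 1 from σ.w_one ▸ h.2⟩
  exact hfF (hU ▸ hfU)

theorem exists_isWeightSum [Nontrivial R] (hU : ρ.U ∩ σ.U = Set.range (algebraMap F R))
    (hadd : ∀ a ∈ S, ∀ b ∈ S, a + b ∈ S) (hmul : ∀ a ∈ S, ∀ b ∈ S, a * b ∈ S)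
    (hf : f ≠ 0) (hg : g ≠ 0) (hfS : f ∈ S) (hgS : g ∈ S) :
    ∃ h ∈ S, IsWeightSum ρ σ f g h := by
  by_cases hfF : f ∈ Set.range (algebraMap F R)
  · obtain ⟨c, rfl⟩ := hfF
    exact exists_isWeightSum_of_algebraMap hmul (by rintro rfl; simp at hf) hfS hgS
  by_cases hgF : g ∈ Set.range (algebraMap F R)
  · obtain ⟨c, rfl⟩ := hgF
    obtain ⟨h, hS, hs⟩ := exists_isWeightSum_of_algebraMap (ρ := ρ) (σ := σ) hmul
      (by rintro rfl; simp at hg) hgS hfS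
    exact ⟨h, hS, hs.swap_args⟩
  by_cases hσ : 0 < σ.w f ∧ 0 < σ.w g
  · exact exists_isWeightSum_of_pos hadd hmul hσ.1 hσ.2 hf hg hfS hgS
  by_cases hρ : 0 < ρ.w f ∧ 0 < ρ.w g
  · obtain ⟨h, hS, hs⟩ := exists_isWeightSum_of_pos (ρ := σ) hadd hmul hρ.1 hρ.2 hf hg hfS hgS
    exact ⟨h, hS, hs.swap_weights⟩
  have hzero {τ : NearWeight F R} {x : R} (hx : x ≠ 0) (h : ¬ 0 < τ.w x) : τ.w x = 0 :=
    (τ.w_eq_zero_or_pos hx).resolve_right h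
  refine ⟨f + g, hadd f hfS g hgS, ?_⟩
  rcases pos_or_pos_of_notMem_range hU hfF with hρf | hσf
  · have hρg := hzero hg fun h => hρ ⟨hρf, h⟩
    have hσg := (pos_or_pos_of_notMem_range hU hgF).resolve_left hρg.not_gt
    exact isWeightSum_add hρg (hzero hf fun h => hσ ⟨h, hσg⟩) hρf hσg
  · have hσg := hzero hg fun h => hσ ⟨hσf, h⟩
    have hρg := (pos_or_pos_of_notMem_range hU hgF).resolve_right hσg.not_gt
    exact (isWeightSum_add hσg (hzero hf fun h => hρ ⟨h, hρg⟩) hσf hρg).swap_weights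

theorem add_mem_Hset (hU : ρ.U ∩ σ.U = Set.range (algebraMap F R))
    (hadd : ∀ a ∈ S, ∀ b ∈ S, a + b ∈ S) (hmul : ∀ a ∈ S, ∀ b ∈ S, a * b ∈ S)
    {a b : ℕ × ℕ} (ha : a ∈ Hset ρ σ S) (hb : b ∈ Hset ρ σ S) : a + b ∈ Hset ρ σ S := by
  obtain ⟨f, hfS, hf, rfl⟩ := ha
  obtain ⟨g, hgS, hg, rfl⟩ := hb
  have : Nontrivial R := nontrivial_of_ne f 0 hf
  obtain ⟨h, hS, hs⟩ := exists_isWeightSum hU hadd hmul hf hg hfS hgS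
  refine ⟨h, hS, hs.ne_zero hf hg, ?_⟩
  rw [nval_eq_add_of_w_eq_add ρ hf hg hs.1, nval_eq_add_of_w_eq_add σ hf hg hs.2]
  rfl

end WeightSum

end NearWeight

variable {F R : Type*} [Field F] [CommRing R] [Algebra F R]

theorem stmt2_general
    (ρ σ : NearWeight F R) (hwa : NearWeight.WellAgreeing ρ σ) :
    (∀ S : Set R, (∀ a ∈ S, ∀ b ∈ S, a + b ∈ S) → (∀ a ∈ S, ∀ b ∈ S, a * b ∈ S) →
      ∀ a ∈ NearWeight.Hset ρ σ S, ∀ b ∈ NearWeight.Hset ρ σ S,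
        a + b ∈ NearWeight.Hset ρ σ S) ∧
    (∀ R' : Subalgebra F R,
      ∀ a ∈ NearWeight.Hset ρ σ (R' : Set R), ∀ b ∈ NearWeight.Hset ρ σ (R' : Set R),
        a + b ∈ NearWeight.Hset ρ σ (R' : Set R)) :=
  have hS _ hadd hmul _ ha _ hb := NearWeight.add_mem_Hset hwa.2 hadd hmul ha hb
  ⟨hS, fun R' => hS R' (fun _ ha _ hb => add_mem ha hb) (fun _ ha _ hb => mul_mem ha hb)⟩

theorem stmt2
    (hinj : Function.Injective (algebraMap F R))
    (hsur : ¬ Function.Surjective (algebraMap F R))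
    (ρ σ : NearWeight F R) (hwa : NearWeight.WellAgreeing ρ σ) :
    (∀ S : Set R, (∀ a ∈ S, ∀ b ∈ S, a + b ∈ S) → (∀ a ∈ S, ∀ b ∈ S, a * b ∈ S) →
      ∀ a ∈ NearWeight.Hset ρ σ S, ∀ b ∈ NearWeight.Hset ρ σ S,
        a + b ∈ NearWeight.Hset ρ σ S) ∧
    (∀ R' : Subalgebra F R,
      ∀ a ∈ NearWeight.Hset ρ σ (R' : Set R), ∀ b ∈ NearWeight.Hset ρ σ (R' : Set R),
        a + b ∈ NearWeight.Hset ρ σ (R' : Set R)) :=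
  stmt2_general ρ σ hwa
end

section
/- Let ρ and σ be two well agreeing near weights on R and let R' be an F-subalgebra of R. If H(R') = H(R), then R' = R. -/
variable {F R : Type*} [Field F] [CommRing R] [Algebra F R]

/-!
Descent on the pair of weights. A nonzero `f` lies in `M_ρ`, in `M_σ`, or in `U_ρ ∩ U_σ = F`.
In the first case `H(R') = H(R)` provides `g ∈ R'` with the same pair of weights, and (N4) yields
`c ∈ F` with `ρ(f - c g) < ρ(f)`, while (N2) gives `σ(f - c g) ≤ σ(f)`; symmetrically in the
second case. So `f - c g` has a strictly smaller weight pair in the product order, which is well founded,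
and `f ∈ R'` follows by induction.
-/

namespace NearWeight

lemma w_eq_nval (ρ : NearWeight F R) {f : R} (hf : f ≠ 0) : ρ.w f = ρ.nval f := by
  obtain ⟨n, hn⟩ := WithBot.ne_bot_iff_exists.mp (mt (ρ.N0 f).mp hf)
  simp only [nval, ← hn, WithBot.unbotD_coe]
  rfl

lemma w_eq_w_of_nval_eq (ρ : NearWeight F R) {f g : R} (hf : f ≠ 0) (hg : g ≠ 0)
    (h : ρ.nval f = ρ.nval g) : ρ.w f = ρ.w g := by
  rw [ρ.w_eq_nval hf, ρ.w_eq_nval hg, h]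

lemma w_sub_smul_le (ρ : NearWeight F R) (f g : R) (c : F) :
    ρ.w (f - c • g) ≤ max (ρ.w f) (ρ.w g) := by
  rcases eq_or_ne c 0 with rfl | hc
  · simp
  · simpa [sub_eq_add_neg, ← neg_smul, ρ.N1 (-c) g (neg_ne_zero.mpr hc)]
      using ρ.N2 f (-c • g)

lemma exists_w_sub_smul_lt (ρ σ : NearWeight F R) {f g : R} (hf : f ∈ ρ.M)
    (hρ : ρ.w g = ρ.w f) (hσ : σ.w g = σ.w f) :
    ∃ c : F, ρ.w (f - c • g) < ρ.w f ∧ σ.w (f - c • g) ≤ σ.w f := by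
  obtain ⟨c, -, hlt⟩ := ρ.N4 f g hf (hρ ▸ hf) hρ.symm
  exact ⟨c, hlt, (σ.w_sub_smul_le f g c).trans (by rw [hσ, max_self])⟩

lemma exists_mem_w_eq_of_Hset_eq (ρ σ : NearWeight F R) {S : Set R}
    (h : Hset ρ σ S = Hset ρ σ Set.univ) {f : R} (hf : f ≠ 0) :
    ∃ g ∈ S, ρ.w g = ρ.w f ∧ σ.w g = σ.w f := by
  obtain ⟨g, hgS, hg, hgf⟩ : (ρ.nval f, σ.nval f) ∈ Hset ρ σ S :=
    h ▸ ⟨f, trivial, hf, rfl⟩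
  obtain ⟨hρ, hσ⟩ := Prod.mk.inj hgf
  exact ⟨g, hgS, ρ.w_eq_w_of_nval_eq hg hf hρ, σ.w_eq_w_of_nval_eq hg hf hσ⟩

theorem mem_of_Hset_eq (ρ σ : NearWeight F R) (hU : ρ.U ∩ σ.U ⊆ Set.range (algebraMap F R))
    (S : Subalgebra F R) (h : Hset ρ σ (S : Set R) = Hset ρ σ Set.univ) (f : R) : f ∈ S := by
  induction f using (InvImage.wf (fun f => (ρ.w f, σ.w f)) wellFounded_lt).induction with
  | _ f IH =>
  rcases eq_or_ne f 0 with rfl | hf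
  · exact S.zero_mem
  obtain ⟨g, hgS, hρ, hσ⟩ := exists_mem_w_eq_of_Hset_eq ρ σ h hf
  have mem_of_descent (c : F)
      (hc : (ρ.w (f - c • g), σ.w (f - c • g)) < (ρ.w f, σ.w f)) : f ∈ S := by
    simpa using S.add_mem (IH _ hc) (S.smul_mem hgS c)
  by_cases hfρ : f ∈ ρ.M
  · obtain ⟨c, hlt, hle⟩ := exists_w_sub_smul_lt ρ σ hfρ hρ hσ
    exact mem_of_descent c (Prod.mk_lt_mk_of_lt_of_le hlt hle)
  by_cases hfσ : f ∈ σ.M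
  · obtain ⟨c, hlt, hle⟩ := exists_w_sub_smul_lt σ ρ hfσ hσ hρ
    exact mem_of_descent c (Prod.mk_lt_mk_of_le_of_lt hle hlt)
  obtain ⟨c, rfl⟩ :=
    hU ⟨(not_lt.mp hfρ : ρ.w f ≤ ρ.w 1), (not_lt.mp hfσ : σ.w f ≤ σ.w 1)⟩
  exact S.algebraMap_mem c

end NearWeight

theorem stmt9_general
    (ρ σ : NearWeight F R) (hwa : NearWeight.WellAgreeing ρ σ)
    (R' : Subalgebra F R)
    (h : NearWeight.Hset ρ σ (R' : Set R) = NearWeight.Hset ρ σ Set.univ) :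
    R' = ⊤ :=
  eq_top_iff.mpr fun f _ => NearWeight.mem_of_Hset_eq ρ σ hwa.2.subset R' h f

theorem stmt9
    (hinj : Function.Injective (algebraMap F R))
    (hsur : ¬ Function.Surjective (algebraMap F R))
    (ρ σ : NearWeight F R) (hwa : NearWeight.WellAgreeing ρ σ)
    (R' : Subalgebra F R)
    (h : NearWeight.Hset ρ σ (R' : Set R) = NearWeight.Hset ρ σ Set.univ) :
    R' = ⊤ :=
  stmt9_general ρ σ hwa R' h
end

section
/- Let ρ and σ be two well agreeing near weights on R, let f ∈ R \ {0}, and let I := (f) be the principal ideal of R generated by f. Then H(I) ∪ {(0,0)} is closed under addition and its complement ℕ² \ (H(I) ∪ {(0,0)}) is finite. -/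
/-! Additivity: for `p, q ∈ I`, one of `p`, `q`, `p * q` has `ρ`-value `ρ p + ρ q` and `σ`-value at
most `σ p + σ q`, and symmetrically; either one of the two is exact, or their sum is.

Cofiniteness: every `x ≠ 0` has a multiple in `M_ρ`, and every element of `M_ρ` one in
`M_ρ ∩ U_σ`. Both come from a descent through (N4): the `ρ`-values on `{y | σ(x y) ≤ s}` form an
infinite set for `s = σ x` (as `H` contains `(m, 0)` for all large `m`), and lowering `s` by one
loses at most one of them, whereas `{y | x y ∈ F}` carries a single nonzero `ρ`-value. Multiplying
an element of `I ∩ M_ρ ∩ U_σ` by elements of `R` gives a half-axis of `H(I)` and, as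
`σ(x y) - σ y` is eventually constant, a point on every row; with the symmetric statements,
additivity fills all but finitely many points. -/

open Filter

lemma Set.add_mem_union_zero {M : Type*} [AddZeroClass M] {S : Set M}
    (h : ∀ a ∈ S, ∀ b ∈ S, a + b ∈ S) : ∀ a ∈ S ∪ {0}, ∀ b ∈ S ∪ {0}, a + b ∈ S ∪ {0} := by
  rintro a (ha | rfl) b (hb | rfl)
  · exact Or.inl (h a ha b hb)
  · rw [add_zero]; exact Or.inl ha
  · rw [zero_add]; exact Or.inl hb
  · simp

lemma Set.finite_compl_of_add_mem {S : Set (ℕ × ℕ)} (hadd : ∀ a ∈ S, ∀ b ∈ S, a + b ∈ S)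
    (hrow : ∀ᶠ p in atTop, (p, 0) ∈ S) (hcol : ∀ᶠ q in atTop, (0, q) ∈ S)
    (hrows : ∀ q, ∃ p, (p, q) ∈ S) (hcols : ∀ p, ∃ q, (p, q) ∈ S) : Sᶜ.Finite := by
  obtain ⟨C, hC⟩ := hrow.exists_forall_of_atTop
  obtain ⟨D, hD⟩ := hcol.exists_forall_of_atTop
  choose c hc using hrows
  choose d hd using hcols
  refine ((Set.finite_Iio (C + (Finset.range D).sup c)).prod
    (Set.finite_Iio (D + (Finset.range C).sup d))).subset fun ⟨p, q⟩ hpq => ?_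
  by_contra hbox
  simp only [Set.mem_prod, Set.mem_Iio, not_and_or, not_lt] at hbox
  refine hpq ?_
  by_cases hp : C ≤ p
  · by_cases hq : D ≤ q
    · simpa using hadd _ (hC p hp) _ (hD q hq)
    · have := Finset.le_sup (f := c) (Finset.mem_range.2 (not_le.1 hq))
      have hsum := hadd _ (hc q) _ (hC (p - c q) (by omega))
      rwa [Prod.mk_add_mk, Nat.add_sub_cancel' (by omega), add_zero] at hsum
  · have := Finset.le_sup (f := d) (Finset.mem_range.2 (not_le.1 hp))
    have hsum := hadd _ (hd p) _ (hD (q - d p) (by omega))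
    rwa [Prod.mk_add_mk, Nat.add_sub_cancel' (by omega), add_zero] at hsum

namespace NearWeight

variable {F R : Type*} [Field F] [CommRing R] [Algebra F R]

section Basic

variable (ρ : NearWeight F R) {x y : R}

@[simp]
lemma w_zero : ρ.w 0 = ⊥ := (ρ.N0 0).2 rfl

@[simp]
lemma nval_zero : ρ.nval 0 = 0 := by simp [nval]

lemma w_eq_nval_s14 (hx : x ≠ 0) : ρ.w x = ρ.nval x := by
  obtain ⟨n, hn⟩ := WithBot.ne_bot_iff_exists.1 fun h => hx ((ρ.N0 x).1 h)
  rw [nval, ← hn]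
  rfl

lemma nval_eq_of_w_eq {n : ℕ} (h : ρ.w x = n) : ρ.nval x = n := by
  rw [nval, h]
  rfl

lemma w_le_nval (x : R) : ρ.w x ≤ ρ.nval x := by
  rcases eq_or_ne x 0 with rfl | hx
  · simp
  · exact (ρ.w_eq_nval_s14 hx).le

lemma nval_le_of_w_le {n : ℕ} (h : ρ.w x ≤ n) : ρ.nval x ≤ n := by
  rcases eq_or_ne x 0 with rfl | hx
  · simp
  · rw [ρ.w_eq_nval_s14 hx] at h
    exact_mod_cast h

lemma ne_zero_of_nval_pos (h : 0 < ρ.nval x) : x ≠ 0 := by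
  rintro rfl
  simp at h

lemma w_lt_of_nval_lt (h : ρ.nval x < ρ.nval y) : ρ.w x < ρ.w y := by
  rw [ρ.w_eq_nval_s14 (ρ.ne_zero_of_nval_pos (Nat.zero_lt_of_lt h))]
  exact (ρ.w_le_nval x).trans_lt (by exact_mod_cast h)

lemma nval_smul {c : F} (hc : c ≠ 0) (x : R) : ρ.nval (c • x) = ρ.nval x := by
  simp [nval, ρ.N1 c x hc]

lemma nval_neg (x : R) : ρ.nval (-x) = ρ.nval x := by
  rw [← neg_one_smul F x, ρ.nval_smul (neg_ne_zero.2 one_ne_zero)]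

lemma nval_add_le (x y : R) : ρ.nval (x + y) ≤ max (ρ.nval x) (ρ.nval y) := by
  refine ρ.nval_le_of_w_le ((ρ.N2 x y).trans (max_le ?_ ?_))
  · exact (ρ.w_le_nval x).trans (by exact_mod_cast le_max_left _ _)
  · exact (ρ.w_le_nval y).trans (by exact_mod_cast le_max_right _ _)

lemma nval_sub_le (x y : R) : ρ.nval (x - y) ≤ max (ρ.nval x) (ρ.nval y) := by
  simpa [sub_eq_add_neg, nval_neg] using ρ.nval_add_le x (-y)

lemma nval_add_of_lt (h : ρ.nval y < ρ.nval x) : ρ.nval (x + y) = ρ.nval x := by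
  have h₁ := ρ.nval_add_le x y
  have h₂ := ρ.nval_sub_le (x + y) y
  rw [add_sub_cancel_right] at h₂
  omega

lemma nval_sub_eq_max (h : ρ.nval x ≠ ρ.nval y) :
    ρ.nval (x - y) = max (ρ.nval x) (ρ.nval y) := by
  rcases h.lt_or_gt with h | h
  · rw [sub_eq_neg_add, ρ.nval_add_of_lt (by rwa [nval_neg]), nval_neg, max_eq_right h.le]
  · rw [sub_eq_add_neg, ρ.nval_add_of_lt (by rwa [nval_neg]), max_eq_left h.le]

lemma nval_mul_le (x y : R) : ρ.nval (x * y) ≤ ρ.nval x + ρ.nval y := by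
  refine ρ.nval_le_of_w_le ((ρ.N5 x y).trans ?_)
  rw [Nat.cast_add]
  exact add_le_add (ρ.w_le_nval x) (ρ.w_le_nval y)

lemma finite_nval_image_of_mul_mem_range [NoZeroDivisors R] (hx : x ≠ 0) :
    (ρ.nval '' {y | x * y ∈ Set.range (algebraMap F R)}).Finite := by
  refine Set.Finite.of_sdiff (Set.Subsingleton.finite ?_) (Set.finite_singleton 0)
  rintro _ ⟨⟨a, ⟨c, hc⟩, rfl⟩, ha⟩ _ ⟨⟨b, ⟨d, hd⟩, rfl⟩, hb⟩
  have ha0 : a ≠ 0 := by rintro rfl; exact ha (by simp)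
  have hb0 : b ≠ 0 := by rintro rfl; exact hb (by simp)
  have hc0 : c ≠ 0 := by rintro rfl; exact mul_ne_zero hx ha0 (by simp [← hc])
  have hd0 : d ≠ 0 := by rintro rfl; exact mul_ne_zero hx hb0 (by simp [← hd])
  have hab : d • a = c • b := mul_left_cancel₀ hx (by
    rw [mul_smul_comm, mul_smul_comm, ← hc, ← hd, Algebra.smul_def, Algebra.smul_def, mul_comm])
  rw [← ρ.nval_smul hd0 a, hab, ρ.nval_smul hc0]

variable [Nontrivial R]

lemma w_one_s14 : ρ.w 1 = 0 := ρ.norm0 1 one_ne_zero le_rfl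

lemma nval_one : ρ.nval 1 = 0 :=
  ρ.nval_eq_of_w_eq (by rw [w_one_s14, Nat.cast_zero])

lemma w_one_lt (hx : 0 < ρ.nval x) : ρ.w 1 < ρ.w x :=
  ρ.w_lt_of_nval_lt (by rwa [nval_one])

lemma mem_U_iff : x ∈ ρ.U ↔ ρ.nval x = 0 := by
  rcases eq_or_ne x 0 with rfl | hx
  · simp [U]
  · change ρ.w x ≤ ρ.w 1 ↔ _
    rw [w_one_s14, ρ.w_eq_nval_s14 hx, ← Nat.cast_zero, Nat.cast_le, Nat.le_zero]

lemma nval_mul (hx : 0 < ρ.nval x) (hy : 0 < ρ.nval y) :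
    ρ.nval (x * y) = ρ.nval x + ρ.nval y := by
  refine ρ.nval_eq_of_w_eq ?_
  rw [ρ.N5' x y (ρ.w_one_lt hx) (ρ.w_one_lt hy), ρ.w_eq_nval_s14 (ρ.ne_zero_of_nval_pos hx),
    ρ.w_eq_nval_s14 (ρ.ne_zero_of_nval_pos hy), Nat.cast_add]

lemma exists_nval_sub_smul_lt (hx : 0 < ρ.nval x) (hxy : ρ.nval x = ρ.nval y) :
    ∃ c : F, c ≠ 0 ∧ ρ.nval (x - c • y) < ρ.nval x := by
  have hy : 0 < ρ.nval y := hxy ▸ hx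
  obtain ⟨c, hc, hlt⟩ := ρ.N4 x y (ρ.w_one_lt hx) (ρ.w_one_lt hy) (by
    rw [ρ.w_eq_nval_s14 (ρ.ne_zero_of_nval_pos hx), ρ.w_eq_nval_s14 (ρ.ne_zero_of_nval_pos hy), hxy])
  refine ⟨c, hc, ?_⟩
  rcases eq_or_ne (x - c • y) 0 with h | h
  · rwa [h, nval_zero]
  · rw [ρ.w_eq_nval_s14 h, ρ.w_eq_nval_s14 (ρ.ne_zero_of_nval_pos hx)] at hlt
    exact_mod_cast hlt

lemma mul_ne_zero_of_nval_pos (hx : 0 < ρ.nval x) (hy : y ≠ 0) : x * y ≠ 0 := by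
  intro hxy
  have := ρ.N3 1 x y (ρ.w_one_lt hx)
  rw [one_mul, hxy, w_zero, le_bot_iff] at this
  exact hy ((ρ.N0 y).1 this)

-- `ρ.nval (x * y) - ρ.nval y` does not depend on `y` once `ρ.nval y` is large.
lemma nval_mul_add_nval_eq {h w : R} (hxh : 0 < ρ.nval (x * h)) (hh : 0 < ρ.nval h)
    (hw : 0 < ρ.nval w) (hlt : ρ.nval h < ρ.nval (x * h) + ρ.nval w) :
    ρ.nval (x * w) + ρ.nval h = ρ.nval (x * h) + ρ.nval w := by
  have key : ρ.nval (x * w * h) = ρ.nval (x * h) + ρ.nval w := by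
    rw [mul_right_comm, ρ.nval_mul hxh hw]
  rcases Nat.eq_zero_or_pos (ρ.nval (x * w)) with h0 | hpos
  · have := ρ.nval_mul_le (x * w) h
    omega
  · rw [← key, ρ.nval_mul hpos hh]

end Basic

section Hset

variable {ρ σ : NearWeight F R} {S : Set R} {m n : ℕ}

lemma mem_Hset_iff : (m, n) ∈ Hset ρ σ S ↔ ∃ z ∈ S, z ≠ 0 ∧ ρ.nval z = m ∧ σ.nval z = n := by
  simp [Hset]

lemma Hset_swap (S : Set R) : Hset σ ρ S = Prod.swap ⁻¹' Hset ρ σ S := by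
  ext ⟨m, n⟩
  simp only [Set.mem_preimage, Prod.swap_prod_mk, mem_Hset_iff]
  exact exists_congr fun _ => and_congr_right' (and_congr_right' and_comm)

end Hset

section Descent

variable (ρ σ : NearWeight F R) [Nontrivial R] (x : R)

-- Two elements of the `(s + 1)`-level with distinct `ρ`-values missing from the `s`-level would,
-- by (N4), have a combination in the `s`-level whose `ρ`-value is one of them.
lemma nval_image_sublevel_succ_sdiff_subsingleton (s : ℕ) :
    (ρ.nval '' {y | σ.nval (x * y) ≤ s + 1} \ ρ.nval '' {y | σ.nval (x * y) ≤ s}).Subsingleton := by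
  rintro _ ⟨⟨a, ha : σ.nval (x * a) ≤ s + 1, rfl⟩, haB⟩
    _ ⟨⟨b, hb : σ.nval (x * b) ≤ s + 1, rfl⟩, hbB⟩
  by_contra hab
  have ha' : σ.nval (x * a) = s + 1 := by
    by_contra h
    exact haB ⟨a, (by omega : σ.nval (x * a) ≤ s), rfl⟩
  have hb' : σ.nval (x * b) = s + 1 := by
    by_contra h
    exact hbB ⟨b, (by omega : σ.nval (x * b) ≤ s), rfl⟩
  obtain ⟨c, hc, hlt⟩ := σ.exists_nval_sub_smul_lt (x := x * a) (y := x * b) (by omega) (by omega)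
  have hmem : σ.nval (x * (a - c • b)) ≤ s := by
    rw [mul_sub, mul_smul_comm]
    omega
  have hρ := ρ.nval_sub_eq_max (x := a) (y := c • b) (by rwa [ρ.nval_smul hc])
  rw [ρ.nval_smul hc] at hρ
  rcases max_choice (ρ.nval a) (ρ.nval b) with h | h
  · exact haB ⟨_, hmem, hρ.trans h⟩
  · exact hbB ⟨_, hmem, hρ.trans h⟩

lemma infinite_nval_image_sublevel_zero_of_infinite {s : ℕ}
    (h : (ρ.nval '' {y | σ.nval (x * y) ≤ s}).Infinite) :
    (ρ.nval '' {y | σ.nval (x * y) ≤ 0}).Infinite := by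
  induction s with
  | zero => exact h
  | succ s ih =>
    refine ih fun hfin => h ?_
    exact ((nval_image_sublevel_succ_sdiff_subsingleton ρ σ x s).finite.union hfin).subset
      (Set.subset_sdiff_union _ _)

end Descent

namespace WellAgreeing

variable {ρ σ : NearWeight F R} {x : R}

lemma symm (hwa : WellAgreeing ρ σ) : WellAgreeing σ ρ := by
  refine ⟨?_, by rw [Set.inter_comm]; exact hwa.2⟩
  rw [Hset_swap, ← Set.preimage_compl]
  exact hwa.1.preimage Prod.swap_injective.injOn

lemma eventually_mem_Hset (hwa : WellAgreeing ρ σ) (n : ℕ) :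
    ∀ᶠ m in atTop, (m, n) ∈ Hset ρ σ Set.univ := by
  rw [← Nat.cofinite_eq_atTop, eventually_cofinite]
  exact hwa.1.preimage (Prod.mk_left_injective n).injOn

variable [Nontrivial R]

lemma mem_range_algebraMap (hwa : WellAgreeing ρ σ) (hρ : ρ.nval x = 0) (hσ : σ.nval x = 0) :
    x ∈ Set.range (algebraMap F R) :=
  hwa.2 ▸ ⟨ρ.mem_U_iff.2 hρ, σ.mem_U_iff.2 hσ⟩

lemma noZeroDivisors (hwa : WellAgreeing ρ σ) : NoZeroDivisors R := by
  refine ⟨fun {x y} hxy => or_iff_not_imp_left.2 fun hx => by_contra fun hy => ?_⟩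
  rcases Nat.eq_zero_or_pos (ρ.nval x) with hρ | hρ
  · rcases Nat.eq_zero_or_pos (σ.nval x) with hσ | hσ
    · obtain ⟨c, rfl⟩ := hwa.mem_range_algebraMap hρ hσ
      have hc : c ≠ 0 := by rintro rfl; simp at hx
      rw [← Algebra.smul_def] at hxy
      exact hy ((smul_eq_zero.1 hxy).resolve_left hc)
    · exact σ.mul_ne_zero_of_nval_pos hσ hy hxy
  · exact ρ.mul_ne_zero_of_nval_pos hρ hy hxy

lemma infinite_nval_image_sublevel_zero (hwa : WellAgreeing ρ σ) (x : R) :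
    (ρ.nval '' {y | σ.nval (x * y) ≤ 0}).Infinite := by
  refine infinite_nval_image_sublevel_zero_of_infinite ρ σ x (s := σ.nval x) ?_
  obtain ⟨N, hN⟩ := (hwa.eventually_mem_Hset 0).exists_forall_of_atTop
  refine (Set.Ici_infinite N).mono fun m hm => ?_
  obtain ⟨g, -, -, hgρ, hgσ⟩ := mem_Hset_iff.1 (hN m hm)
  exact ⟨g, by simpa [hgσ] using σ.nval_mul_le x g, hgρ⟩

lemma exists_nval_mul_pos (hwa : WellAgreeing ρ σ) (hx : x ≠ 0) : ∃ y, 0 < ρ.nval (x * y) := by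
  have := hwa.noZeroDivisors
  by_contra! h
  refine hwa.infinite_nval_image_sublevel_zero x ((ρ.finite_nval_image_of_mul_mem_range hx).subset
    (Set.image_mono fun y hy => hwa.mem_range_algebraMap ?_ (Nat.le_zero.1 hy)))
  simpa using h y

lemma exists_nval_mul_pos_and_eq_zero (hwa : WellAgreeing ρ σ) (hx : 0 < ρ.nval x) :
    ∃ y, 0 < ρ.nval (x * y) ∧ σ.nval (x * y) = 0 := by
  obtain ⟨_, ⟨y, hy, rfl⟩, hyρ⟩ := (hwa.infinite_nval_image_sublevel_zero x).exists_gt 0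
  exact ⟨y, by rw [ρ.nval_mul hx hyρ]; omega, Nat.le_zero.1 hy⟩

lemma exists_nval_mul_eq (hwa : WellAgreeing ρ σ) (hx : x ≠ 0) (hσx : σ.nval x = 0) {q : ℕ}
    (hq : 0 < q) : ∃ y, σ.nval (x * y) = q := by
  obtain ⟨h, hxh⟩ := hwa.symm.exists_nval_mul_pos hx
  have hh : σ.nval (x * h) ≤ σ.nval h := by simpa [hσx] using σ.nval_mul_le x h
  obtain ⟨_, hw⟩ := (hwa.eventually_mem_Hset (q + σ.nval h - σ.nval (x * h))).exists
  obtain ⟨w, -, -, -, hwσ⟩ := mem_Hset_iff.1 hw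
  have := σ.nval_mul_add_nval_eq (w := w) hxh (by omega) (by omega) (by omega)
  exact ⟨w, by omega⟩

end WellAgreeing

section Ideal

variable [Nontrivial R] {I : Ideal R}

lemma exists_mem_nval_eq_add (ρ σ : NearWeight F R) [NoZeroDivisors R] {p q : R} (hp : p ∈ I)
    (hq : q ∈ I) (hp0 : p ≠ 0) (hq0 : q ≠ 0) :
    ∃ z ∈ I, z ≠ 0 ∧ ρ.nval z = ρ.nval p + ρ.nval q ∧ σ.nval z ≤ σ.nval p + σ.nval q := by
  rcases Nat.eq_zero_or_pos (ρ.nval p) with hρp | hρp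
  · exact ⟨q, hq, hq0, by omega, by omega⟩
  rcases Nat.eq_zero_or_pos (ρ.nval q) with hρq | hρq
  · exact ⟨p, hp, hp0, by omega, by omega⟩
  exact ⟨p * q, I.mul_mem_right q hp, mul_ne_zero hp0 hq0, ρ.nval_mul hρp hρq, σ.nval_mul_le p q⟩

lemma add_mem_Hset_ideal [NoZeroDivisors R] {ρ σ : NearWeight F R} {a b : ℕ × ℕ}
    (ha : a ∈ Hset ρ σ I) (hb : b ∈ Hset ρ σ I) : a + b ∈ Hset ρ σ I := by
  obtain ⟨p, hp, hp0, rfl⟩ := ha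
  obtain ⟨q, hq, hq0, rfl⟩ := hb
  obtain ⟨z₁, hz₁, hz₁0, hρ₁, hσ₁⟩ := exists_mem_nval_eq_add ρ σ hp hq hp0 hq0
  obtain ⟨z₂, hz₂, hz₂0, hσ₂, hρ₂⟩ := exists_mem_nval_eq_add σ ρ hp hq hp0 hq0
  rw [Prod.mk_add_mk, mem_Hset_iff]
  rcases hσ₁.lt_or_eq with hσ₁ | hσ₁
  · rcases hρ₂.lt_or_eq with hρ₂ | hρ₂
    · have hρ : ρ.nval (z₁ + z₂) = ρ.nval z₁ := ρ.nval_add_of_lt (by omega)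
      have hσ : σ.nval (z₁ + z₂) = σ.nval z₂ := by
        rw [add_comm]
        exact σ.nval_add_of_lt (by omega)
      exact ⟨z₁ + z₂, I.add_mem hz₁ hz₂, ρ.ne_zero_of_nval_pos (by omega), by omega, by omega⟩
    · exact ⟨z₂, hz₂, hz₂0, hρ₂, hσ₂⟩
  · exact ⟨z₁, hz₁, hz₁0, hρ₁, hσ₁⟩

namespace WellAgreeing

variable {ρ σ : NearWeight F R}

lemma exists_mem_ideal_nval_pos_nval_eq_zero (hwa : WellAgreeing ρ σ) (hI : I ≠ ⊥) :
    ∃ z ∈ I, 0 < ρ.nval z ∧ σ.nval z = 0 := by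
  obtain ⟨f, hf, hf0⟩ := Submodule.exists_mem_ne_zero_of_ne_bot hI
  obtain ⟨y, hy⟩ := hwa.exists_nval_mul_pos hf0
  obtain ⟨a, ha⟩ := hwa.exists_nval_mul_pos_and_eq_zero hy
  exact ⟨f * y * a, I.mul_mem_right a (I.mul_mem_right y hf), ha⟩

lemma eventually_mem_Hset_ideal (hwa : WellAgreeing ρ σ) (hI : I ≠ ⊥) :
    ∀ᶠ m in atTop, (m, 0) ∈ Hset ρ σ I := by
  obtain ⟨z, hz, hzρ, hzσ⟩ := hwa.exists_mem_ideal_nval_pos_nval_eq_zero hI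
  obtain ⟨N, hN⟩ := (hwa.eventually_mem_Hset 0).exists_forall_of_atTop
  filter_upwards [eventually_ge_atTop (ρ.nval z + N + 1)] with m hm
  obtain ⟨g, -, -, hgρ, hgσ⟩ := mem_Hset_iff.1 (hN (m - ρ.nval z) (by omega))
  have hzg : ρ.nval (z * g) = m := by rw [ρ.nval_mul hzρ (by omega)]; omega
  refine mem_Hset_iff.2 ⟨z * g, I.mul_mem_right g hz, ρ.ne_zero_of_nval_pos (by omega), hzg, ?_⟩
  simpa [hzσ, hgσ] using σ.nval_mul_le z g

lemma exists_mem_Hset_ideal (hwa : WellAgreeing ρ σ) (hI : I ≠ ⊥) {q : ℕ} (hq : 0 < q) :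
    ∃ p, (p, q) ∈ Hset ρ σ I := by
  obtain ⟨z, hz, hzρ, hzσ⟩ := hwa.exists_mem_ideal_nval_pos_nval_eq_zero hI
  obtain ⟨y, hy⟩ := hwa.exists_nval_mul_eq (ρ.ne_zero_of_nval_pos hzρ) hzσ hq
  exact ⟨_, mem_Hset_iff.2
    ⟨z * y, I.mul_mem_right y hz, σ.ne_zero_of_nval_pos (by omega), rfl, hy⟩⟩

end WellAgreeing

end Ideal

end NearWeight

variable {F R : Type*} [Field F] [CommRing R] [Algebra F R]

theorem stmt14_general
    (ρ σ : NearWeight F R) (hwa : NearWeight.WellAgreeing ρ σ)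
    (f : R) (hf : f ≠ 0) :
    (∀ a ∈ NearWeight.Hset ρ σ ((Ideal.span {f} : Ideal R) : Set R) ∪ {((0 : ℕ), (0 : ℕ))},
      ∀ b ∈ NearWeight.Hset ρ σ ((Ideal.span {f} : Ideal R) : Set R) ∪ {((0 : ℕ), (0 : ℕ))},
        a + b ∈ NearWeight.Hset ρ σ ((Ideal.span {f} : Ideal R) : Set R) ∪
          {((0 : ℕ), (0 : ℕ))}) ∧
    ((NearWeight.Hset ρ σ ((Ideal.span {f} : Ideal R) : Set R) ∪
      {((0 : ℕ), (0 : ℕ))})ᶜ).Finite := by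
  have : Nontrivial R := ⟨⟨f, 0, hf⟩⟩
  have := hwa.noZeroDivisors
  have hI : Ideal.span {f} ≠ ⊥ := by rwa [Ne, Ideal.span_singleton_eq_bot]
  have hadd := Set.add_mem_union_zero fun _ ha _ hb =>
    NearWeight.add_mem_Hset_ideal (ρ := ρ) (σ := σ) (I := Ideal.span {f}) ha hb
  refine ⟨hadd, Set.finite_compl_of_add_mem hadd ?_ ?_ ?_ ?_⟩
  · exact (hwa.eventually_mem_Hset_ideal hI).mono fun _ => Or.inl
  · refine (hwa.symm.eventually_mem_Hset_ideal hI).mono fun _ h => Or.inl ?_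
    rwa [NearWeight.Hset_swap] at h
  · rintro (_ | q)
    · exact ⟨0, Or.inr rfl⟩
    · exact (hwa.exists_mem_Hset_ideal hI q.succ_pos).imp fun _ => Or.inl
  · rintro (_ | p)
    · exact ⟨0, Or.inr rfl⟩
    · obtain ⟨q, hq⟩ := hwa.symm.exists_mem_Hset_ideal hI p.succ_pos
      exact ⟨q, Or.inl (by rwa [NearWeight.Hset_swap] at hq)⟩

theorem stmt14
    (hinj : Function.Injective (algebraMap F R))
    (hsur : ¬ Function.Surjective (algebraMap F R))
    (ρ σ : NearWeight F R) (hwa : NearWeight.WellAgreeing ρ σ)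
    (f : R) (hf : f ≠ 0) :
    (∀ a ∈ NearWeight.Hset ρ σ ((Ideal.span {f} : Ideal R) : Set R) ∪ {((0 : ℕ), (0 : ℕ))},
      ∀ b ∈ NearWeight.Hset ρ σ ((Ideal.span {f} : Ideal R) : Set R) ∪ {((0 : ℕ), (0 : ℕ))},
        a + b ∈ NearWeight.Hset ρ σ ((Ideal.span {f} : Ideal R) : Set R) ∪
          {((0 : ℕ), (0 : ℕ))}) ∧
    ((NearWeight.Hset ρ σ ((Ideal.span {f} : Ideal R) : Set R) ∪
      {((0 : ℕ), (0 : ℕ))})ᶜ).Finite :=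
  stmt14_general ρ σ hwa f hf
end
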